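/- There exists an open dense set U ⊆ ω^ω × ω^ω such that for every Silver tree T ⊆ ω^{<ω}, the set [T] × [T] is not contained in U ∪ Δ, where Δ = {(x,x) : x ∈ ω^ω}. -/

import Mathlib

open Set

/-- `T` is a tree on `ℕ`: a set of finite sequences closed under initial segments. -/
def IsTree (T : Set (List ℕ)) : Prop := ∀ σ ∈ T, ∀ n : ℕ, σ.take n ∈ T

/-- The body of a tree: all infinite sequences all of whose initial segments lie in `T`. -/
def body (T : Set (List ℕ)) : Set (ℕ → ℕ) :=
  {x | ∀ n : ℕ, List.ofFn (fun i : Fin n => x i) ∈ T}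

/-- `σ` is a splitting node of `T`: it has at least two immediate successors in `T`. -/
def Splits (T : Set (List ℕ)) (σ : List ℕ) : Prop :=
  ∃ a b : ℕ, a ≠ b ∧ σ ++ [a] ∈ T ∧ σ ++ [b] ∈ T

/-- `T` is a perfect tree: a nonempty tree in which every node has a splitting
extension in `T`. -/
def IsPerfectTree (T : Set (List ℕ)) : Prop :=
  T.Nonempty ∧ IsTree T ∧ ∀ σ ∈ T, ∃ τ ∈ T, σ <+: τ ∧ Splits T τ

/-- `T` is a Silver tree: a perfect tree such that nodes of equal length have the same
immediate successor extensions. -/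
def IsSilverTree (T : Set (List ℕ)) : Prop :=
  IsPerfectTree T ∧
    ∀ σ ∈ T, ∀ τ ∈ T, σ.length = τ.length → ∀ a : ℕ, (σ ++ [a] ∈ T ↔ τ ++ [a] ∈ T)

/-- The diagonal of the square of Baire space. -/
def diag : Set ((ℕ → ℕ) × (ℕ → ℕ)) := {p | p.1 = p.2}

-- restriction
lemma restr_succ (x : ℕ → ℕ) (n : ℕ) :
    List.ofFn (fun i : Fin (n+1) => x i) = List.ofFn (fun i : Fin n => x i) ++ [x n] := by
  rw [List.ofFn_succ']
  simp [List.concat_eq_append, Fin.last]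

lemma restr_congr {x y : ℕ → ℕ} (n : ℕ) (h : ∀ i < n, x i = y i) :
    List.ofFn (fun i : Fin n => x i) = List.ofFn (fun i : Fin n => y i) := by
  congr 1
  funext i
  exact h i i.2

/-- There is an open dense subset `U` of the plane of Baire space such that
`[T] × [T] ⊄ U ∪ Δ` for every Silver tree `T`. -/
theorem openDense_omitting_silver_squares :
    ∃ U : Set ((ℕ → ℕ) × (ℕ → ℕ)), IsOpen U ∧ Dense U ∧
      ∀ T : Set (List ℕ), IsSilverTree T → ¬ (body T ×ˢ body T ⊆ U ∪ diag) := by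
  classical
  refine ⟨{p | ∃ m n : ℕ, m ≠ n ∧ p.1 m ≠ p.2 m ∧ p.1 n ≠ p.2 n}, ?_, ?_, ?_⟩
  · -- open
    have hcoord : ∀ m : ℕ, IsOpen {p : (ℕ → ℕ) × (ℕ → ℕ) | p.1 m ≠ p.2 m} := by
      intro m
      have hf : Continuous (fun p : (ℕ → ℕ) × (ℕ → ℕ) => (p.1 m, p.2 m)) :=
        ((continuous_apply m).comp continuous_fst).prodMk
          ((continuous_apply m).comp continuous_snd)
      exact (isOpen_discrete {q : ℕ × ℕ | q.1 ≠ q.2}).preimage hf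
    have : {p : (ℕ → ℕ) × (ℕ → ℕ) | ∃ m n : ℕ, m ≠ n ∧ p.1 m ≠ p.2 m ∧ p.1 n ≠ p.2 n}
        = ⋃ m, ⋃ n, ⋃ (_ : m ≠ n),
            ({p : (ℕ → ℕ) × (ℕ → ℕ) | p.1 m ≠ p.2 m} ∩ {p | p.1 n ≠ p.2 n}) := by
      ext p
      simp only [Set.mem_iUnion, Set.mem_inter_iff, Set.mem_setOf_eq]
      tauto
    rw [this]
    exact isOpen_iUnion fun m => isOpen_iUnion fun n => isOpen_iUnion fun _ =>
      (hcoord m).inter (hcoord n)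
  · -- dense
    rw [dense_iff_inter_open]
    rintro V hV ⟨p, hp⟩
    have hVmem : V ∈ nhds p := hV.mem_nhds hp
    rw [nhds_prod_eq, Filter.mem_prod_iff] at hVmem
    obtain ⟨A, hA, B, hB, hAB⟩ := hVmem
    rw [nhds_pi] at hA
    rw [Filter.mem_pi] at hA
    obtain ⟨I, hIfin, t, ht, htA⟩ := hA
    have hx : ∀ i, p.1 i ∈ t i := by
      intro i
      have := ht i
      rw [nhds_discrete] at this
      exact this
    -- modify p.1 outside I
    set x' : ℕ → ℕ := fun i => if i ∈ I then p.1 i else p.2 i + 1 with hx'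
    have hx'A : x' ∈ A := htA fun i hi => by simp only [hx', if_pos hi]; exact hx i
    have hpB : p.2 ∈ B := mem_of_mem_nhds hB
    -- two coordinates outside I
    obtain ⟨m, hm⟩ := hIfin.infinite_compl.nonempty
    obtain ⟨n, hn⟩ := (hIfin.union (Set.finite_singleton m)).infinite_compl.nonempty
    rw [Set.mem_compl_iff, Set.mem_union, not_or] at hn
    refine ⟨(x', p.2), hAB ⟨hx'A, hpB⟩, m, n, ?_, ?_, ?_⟩
    · intro h; exact hn.2 (h ▸ rfl)
    · simp only [hx', if_neg hm]; omega
    · simp only [hx', if_neg hn.1]; omega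
  · -- Silver trees
    rintro T ⟨⟨⟨ρ, hρ⟩, htree, hperf⟩, hsil⟩ hsub
    have hnil : ([] : List ℕ) ∈ T := by
      have := htree ρ hρ 0
      simpa using this
    -- one-step extension
    have step : ∀ σ : List ℕ, ∃ a : ℕ, σ ∈ T → σ ++ [a] ∈ T := by
      intro σ
      by_cases hσ : σ ∈ T
      · obtain ⟨τ, hτ, hpre, a, b, _, ha, _⟩ := hperf σ hσ
        obtain ⟨δ, rfl⟩ := hpre
        rcases δ with _ | ⟨c, δ'⟩
        · exact ⟨a, fun _ => by simpa using ha⟩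
        · refine ⟨c, fun _ => ?_⟩
          have := htree _ ha (σ.length + 1)
          simpa [List.take_append, List.take_succ_cons,
            List.take_of_length_le (Nat.le_succ σ.length)] using this
      · exact ⟨0, fun h => absurd h hσ⟩
    choose ext hext using step
    -- build a branch
    set g : ℕ → List ℕ := fun n => Nat.rec ([] : List ℕ) (fun _ σ => σ ++ [ext σ]) n with hg
    have hgT : ∀ n, g n ∈ T := by
      intro n
      induction n with
      | zero => exact hnil
      | succ n ih => exact hext (g n) ih
    have hglen : ∀ n, (g n).length = n := by
      intro n
      induction n with
      | zero => rfl
      | succ n ih =>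
        show (g n ++ [ext (g n)]).length = n + 1
        simp [ih]
    set x : ℕ → ℕ := fun n => ext (g n) with hxdef
    have hgx : ∀ n, g n = List.ofFn (fun i : Fin n => x i) := by
      intro n
      induction n with
      | zero => rfl
      | succ n ih =>
        rw [restr_succ, ← ih]
    have hxT : x ∈ body T := fun n => (hgx n) ▸ hgT n
    -- splitting node
    obtain ⟨τ, hτ, _, a, b, hab, ha, hb⟩ := hperf [] hnil
    set k := τ.length with hk
    have hxk : List.ofFn (fun i : Fin k => x i) ∈ T := hxT k
    have hlen : (List.ofFn (fun i : Fin k => x i)).length = τ.length := by simp [hk]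
    have ha' : List.ofFn (fun i : Fin k => x i) ++ [a] ∈ T := (hsil _ hxk τ hτ hlen a).mpr ha
    have hb' : List.ofFn (fun i : Fin k => x i) ++ [b] ∈ T := (hsil _ hxk τ hτ hlen b).mpr hb
    set c : ℕ := if x k = a then b else a with hc
    have hcne : c ≠ x k := by
      by_cases h : x k = a
      · rw [hc, if_pos h, h]; exact fun e => hab e.symm
      · rw [hc, if_neg h]; exact fun e => h e.symm
    have hc' : List.ofFn (fun i : Fin k => x i) ++ [c] ∈ T := by
      by_cases h : x k = a
      · rw [hc, if_pos h]; exact hb'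
      · rw [hc, if_neg h]; exact ha'
    set y : ℕ → ℕ := fun n => if n = k then c else x n with hy
    have hyx : ∀ i, i ≠ k → y i = x i := fun i hi => by simp [hy, hi]
    have hyrestr : ∀ n, n ≤ k →
        List.ofFn (fun i : Fin n => y i) = List.ofFn (fun i : Fin n => x i) := by
      intro n hn
      refine restr_congr n fun i hi => hyx i ?_
      omega
    have hyT : y ∈ body T := by
      intro n
      induction n with
      | zero => exact hnil
      | succ n ih =>
        rw [restr_succ]
        rcases lt_trichotomy n k with h | h | h
        · rw [hyrestr n (le_of_lt h), hyx n (by omega), ← restr_succ]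
          exact hxT (n+1)
        · subst h
          rw [hyrestr k le_rfl]
          simpa [hy] using hc'
        · have hlen2 : (List.ofFn (fun i : Fin n => y i)).length
              = (List.ofFn (fun i : Fin n => x i)).length := by simp
          rw [hyx n (by omega)]
          have hxn : List.ofFn (fun i : Fin n => x i) ++ [x n] ∈ T := by
            rw [← restr_succ]; exact hxT (n+1)
          exact (hsil _ ih _ (hxT n) hlen2 (x n)).mpr hxn
    have hmem : (x, y) ∈ body T ×ˢ body T := ⟨hxT, hyT⟩
    rcases hsub hmem with hU | hD
    · obtain ⟨m, n, hmn, hm, hn⟩ := hU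
      have hm' : m = k := by
        by_contra h
        exact hm (hyx m h).symm
      have hn' : n = k := by
        by_contra h
        exact hn (hyx n h).symm
      exact hmn (hm'.trans hn'.symm)
    · have : x k = y k := congrFun hD k
      rw [hy] at this
      simp at this
      exact hcne this.symm
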